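/- Assume: (1) P ∈ ℝ^{m×(L+1)p} satisfies P · I_L = [I_m, 0]; define Ã := A − B P O_L and C̃ := −P O_L; (2) the pair (A, C) is observable, i.e., the only ξ ∈ ℝⁿ with C A^k ξ = 0 for all k = 0,…,n−1 is ξ = 0; (3) N ≥ n; (4) X̃ ∈ ℝ^{n×s} is a matrix whose column space equals the output-nulling subspace V₀. Let Õ_{N−1} ∈ ℝ^{Nm×n} be the matrix with block rows C̃ Ã^k for k = 0,…,N−1, let G be a Moore–Penrose pseudoinverse of Õ_{N−1} X̃, define M_u := C̃ Ã^N X̃ G ∈ ℝ^{m×Nm}, and let R ∈ ℝ^{Nm×Nm} be the block companion matrix whose (i, i+1) blocks equal I_m for i = 1,…,N−1, whose last block row equals M_u, and whose remaining blocks are zero. Then all complex eigenvalues of R have modulus strictly less than 1 if and only if every invariant zero z ∈ ℂ of the system (A,B,C,D) satisfies |z| < 1. -/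

import Mathlib

open Matrix

/-- Block observability matrix `O_L` with block rows `C A^k`, `k = 0,…,L`. -/
noncomputable def obsMat {n p : ℕ} (A : Matrix (Fin n) (Fin n) ℝ)
    (C : Matrix (Fin p) (Fin n) ℝ) (L : ℕ) :
    Matrix (Fin (L + 1) × Fin p) (Fin n) ℝ :=
  fun kr j => (C * A ^ (kr.1 : ℕ)) kr.2 j

/-- Block invertibility (Toeplitz) matrix `I_L` of the LTI system `(A,B,C,D)`. -/
noncomputable def invMat {n m p : ℕ} (A : Matrix (Fin n) (Fin n) ℝ)
    (B : Matrix (Fin n) (Fin m) ℝ) (C : Matrix (Fin p) (Fin n) ℝ)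
    (D : Matrix (Fin p) (Fin m) ℝ) (L : ℕ) :
    Matrix (Fin (L + 1) × Fin p) (Fin (L + 1) × Fin m) ℝ :=
  fun jr ic =>
    if (jr.1 : ℕ) = (ic.1 : ℕ) then D jr.2 ic.2
    else if (ic.1 : ℕ) < (jr.1 : ℕ) then
      (C * A ^ ((jr.1 : ℕ) - (ic.1 : ℕ) - 1) * B) jr.2 ic.2
    else 0

/-- The block matrix `[I_m, 0] ∈ ℝ^{m × (L+1)m}`. -/
noncomputable def idZero (m L : ℕ) : Matrix (Fin m) (Fin (L + 1) × Fin m) ℝ :=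
  fun r ic => if (ic.1 : ℕ) = 0 ∧ r = ic.2 then 1 else 0

/-- The state sequence of `x_{k+1} = A x_k + B u_k` from initial state `ξ`. -/
noncomputable def stateSeq {n m : ℕ} (A : Matrix (Fin n) (Fin n) ℝ)
    (B : Matrix (Fin n) (Fin m) ℝ) (ξ : Fin n → ℝ) (u : ℕ → Fin m → ℝ) :
    ℕ → Fin n → ℝ
  | 0 => ξ
  | k + 1 => A.mulVec (stateSeq A B ξ u k) + B.mulVec (u k)

/-- The output-nulling subspace `V₀`: states from which some input sequence keeps the
output `y_k = C x_k + D u_k` identically zero. -/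
def outputNulling {n m p : ℕ} (A : Matrix (Fin n) (Fin n) ℝ)
    (B : Matrix (Fin n) (Fin m) ℝ) (C : Matrix (Fin p) (Fin n) ℝ)
    (D : Matrix (Fin p) (Fin m) ℝ) : Set (Fin n → ℝ) :=
  {ξ | ∃ u : ℕ → Fin m → ℝ, ∀ k, C.mulVec (stateSeq A B ξ u k) + D.mulVec (u k) = 0}

/-- The Rosenbrock matrix `[A - zI, B; C, D] ∈ ℂ^{(n+p) × (n+m)}`. -/
noncomputable def rosenbrock {n m p : ℕ} (A : Matrix (Fin n) (Fin n) ℝ)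
    (B : Matrix (Fin n) (Fin m) ℝ) (C : Matrix (Fin p) (Fin n) ℝ)
    (D : Matrix (Fin p) (Fin m) ℝ) (z : ℂ) :
    Matrix (Fin n ⊕ Fin p) (Fin n ⊕ Fin m) ℂ :=
  Matrix.fromBlocks (A.map Complex.ofReal - z • 1) (B.map Complex.ofReal)
    (C.map Complex.ofReal) (D.map Complex.ofReal)

/-- Block observability-type matrix with block rows `C̃ Ã^k`, `k = 0,…,N-1`. -/
noncomputable def tildeObs {n m : ℕ} (Atil : Matrix (Fin n) (Fin n) ℝ)
    (Ctil : Matrix (Fin m) (Fin n) ℝ) (N : ℕ) :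
    Matrix (Fin N × Fin m) (Fin n) ℝ :=
  fun kr j => (Ctil * Atil ^ (kr.1 : ℕ)) kr.2 j

/-- Block companion matrix: identity blocks on the superdiagonal, last block row `M_u`. -/
noncomputable def blockCompanion {N m : ℕ} (Mu : Matrix (Fin m) (Fin N × Fin m) ℝ) :
    Matrix (Fin N × Fin m) (Fin N × Fin m) ℝ :=
  fun ir jc =>
    if (ir.1 : ℕ) + 1 = N then Mu ir.2 jc
    else if (jc.1 : ℕ) = (ir.1 : ℕ) + 1 ∧ ir.2 = jc.2 then 1 else 0

/-- `G` is a Moore–Penrose pseudoinverse of `K`. -/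
def IsMoorePenrose {a b : Type*} [Fintype a] [Fintype b] (K : Matrix a b ℝ)
    (G : Matrix b a ℝ) : Prop :=
  K * G * K = K ∧ G * K * G = G ∧ (K * G)ᵀ = K * G ∧ (G * K)ᵀ = G * K


/-!
The first input of an output-nulling trajectory is `C̃ x₀` (apply `P` to the stacked output
equations), so `V₀` is `Ã`-invariant, is annihilated by `C + D C̃`, and, by observability and
`N ≥ n`, meets `ker Õ_{N-1}` only in `0`. Hence `K := Õ_{N-1} X̃` has the kernel of `X̃`, so
`X̃ G K = X̃`, and the shift structure of `R` gives `R K = Õ_{N-1} Ã X̃ = K F` with `X̃ F = Ã X̃`.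

If `z` is an invariant zero with kernel vector `(x, u)`, the real and imaginary parts of the
trajectory `(zᵏ x, zᵏ u)` are output-nulling, so `u = C̃ x` and `x = X̃ v`; then `Ã x = z x` and
`K v` is an eigenvector of `R`. Conversely let `R U = z U` with `|z| ≥ 1`. The component
`W = U - K G U` satisfies `G W = 0`, so `R W = S W` for the nilpotent block shift `S`, and
`(1 - K G) S W = z W`. As `K G` is an orthogonal projection and `S` a contraction, this forces
`S W = z W`, hence `W = 0`; so `U = K v` and `Ã (X̃ v) = z X̃ v`, making `z` an invariant zero.
-/

section LinearAlgebra

variable {K ι κ : Type*} [Field K]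

theorem Matrix.rank_lt_card_width_iff [Fintype κ] (M : Matrix ι κ K) :
    M.rank < Fintype.card κ ↔ ∃ v, v ≠ 0 ∧ M *ᵥ v = 0 := by
  have hdim := LinearMap.finrank_range_add_finrank_ker M.mulVecLin
  rw [Module.finrank_fintype_fun_eq_card] at hdim
  have hlt : M.rank < Fintype.card κ ↔ Module.finrank K (LinearMap.ker M.mulVecLin) ≠ 0 := by
    rw [Matrix.rank]; omega
  rw [hlt, Ne, Submodule.finrank_eq_zero, ← Ne, Submodule.ne_bot_iff]
  simp [and_comm]

theorem Matrix.mem_spectrum_iff_exists_mulVec_eq_smul [Fintype ι] [DecidableEq ι]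
    (M : Matrix ι ι K) (z : K) :
    z ∈ spectrum K M ↔ ∃ v, v ≠ 0 ∧ M *ᵥ v = z • v := by
  rw [← Matrix.spectrum_toLin', ← Module.End.hasEigenvalue_iff_mem_spectrum]
  constructor
  · intro h
    obtain ⟨v, hv⟩ := h.exists_hasEigenvector
    exact ⟨v, hv.2, by simpa using hv.apply_eq_smul⟩
  · rintro ⟨v, hv, hMv⟩
    exact Module.End.hasEigenvalue_of_hasEigenvector
      ⟨Module.End.mem_eigenspace_iff.mpr (by simpa using hMv), hv⟩

end LinearAlgebra

section MatrixFactor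

variable {K ι κ μ : Type*} [Field K] [Fintype κ]

theorem Matrix.exists_mul_eq_of_forall_exists_mulVec_eq [Fintype μ] [DecidableEq κ]
    {X : Matrix ι μ K} {Y : Matrix ι κ K} (h : ∀ w, ∃ v, X *ᵥ v = Y *ᵥ w) :
    ∃ F : Matrix μ κ K, X * F = Y := by
  choose f hf using fun j : κ => h (Pi.single j 1)
  refine ⟨Matrix.of fun i j => f j i, ext_of_mulVec_single fun j => ?_⟩
  rw [← mulVec_mulVec, mulVec_single_one, ← hf]
  rfl

theorem Matrix.mul_mul_eq_of_mulVec_eq_zero {X : Matrix ι κ K} {M : Matrix μ κ K}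
    [Fintype μ] {G : Matrix κ μ K} (hker : ∀ w, M *ᵥ w = 0 → X *ᵥ w = 0)
    (hMGM : M * G * M = M) : X * G * M = X := by
  refine ext_iff_mulVec.mpr fun v => ?_
  have hv : M *ᵥ ((G * M) *ᵥ v - v) = 0 := by
    rw [mulVec_sub, mulVec_mulVec, ← Matrix.mul_assoc, hMGM, sub_self]
  rw [← sub_eq_zero, ← mulVec_mulVec, ← mulVec_mulVec, ← mulVec_sub, mulVec_mulVec]
  exact hker _ hv

end MatrixFactor

section Complexification

variable {a b c : Type*}

theorem Matrix.map_ofReal_mul [Fintype b] (M : Matrix a b ℝ) (N : Matrix b c ℝ) :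
    (M * N).map Complex.ofReal = M.map Complex.ofReal * N.map Complex.ofReal :=
  Matrix.map_mul (f := Complex.ofRealHom)

theorem Matrix.map_ofReal_add (M N : Matrix a b ℝ) :
    (M + N).map Complex.ofReal = M.map Complex.ofReal + N.map Complex.ofReal :=
  Matrix.map_add _ Complex.ofReal_add M N

theorem Matrix.re_map_ofReal_mulVec_apply [Fintype b] (M : Matrix a b ℝ) (v : b → ℂ) (i : a) :
    ((M.map Complex.ofReal *ᵥ v) i).re = (M *ᵥ fun j => (v j).re) i := by
  simp [mulVec, dotProduct, Complex.re_sum]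

theorem Matrix.im_map_ofReal_mulVec_apply [Fintype b] (M : Matrix a b ℝ) (v : b → ℂ) (i : a) :
    ((M.map Complex.ofReal *ᵥ v) i).im = (M *ᵥ fun j => (v j).im) i := by
  simp [mulVec, dotProduct, Complex.im_sum]

end Complexification

section Compression

variable {𝕜 E : Type*} [RCLike 𝕜] [NormedAddCommGroup E] [InnerProductSpace 𝕜 E]

theorem LinearMap.IsSymmetricProjection.norm_sq_eq_add {Q : E →ₗ[𝕜] E}
    (hQ : Q.IsSymmetricProjection) (y : E) : ‖y‖ ^ 2 = ‖Q y‖ ^ 2 + ‖y - Q y‖ ^ 2 := by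
  have horth : inner 𝕜 (Q y) (y - Q y) = 0 := by
    rw [hQ.isSymmetric, map_sub, ← Module.End.mul_apply, hQ.isIdempotentElem.eq, sub_self,
      inner_zero_right]
  have hpyth := norm_add_sq_eq_norm_sq_add_norm_sq_of_inner_eq_zero _ _ horth
  rw [add_sub_cancel] at hpyth
  simpa only [sq] using hpyth

theorem LinearMap.IsSymmetricProjection.apply_eq_smul_of_sub_apply_eq_smul {Q S : E →ₗ[𝕜] E}
    (hQ : Q.IsSymmetricProjection) (hS : ∀ x, ‖S x‖ ≤ ‖x‖) {z : 𝕜} (hz : 1 ≤ ‖z‖) {w : E}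
    (hw : S w - Q (S w) = z • w) : S w = z • w := by
  have hpyth := hQ.norm_sq_eq_add (S w)
  rw [hw, norm_smul] at hpyth
  have hSw : ‖S w‖ ^ 2 ≤ ‖w‖ ^ 2 := pow_le_pow_left₀ (norm_nonneg _) (hS w) 2
  have hzw : ‖w‖ ^ 2 ≤ (‖z‖ * ‖w‖) ^ 2 := by
    rw [mul_pow]
    exact le_mul_of_one_le_left (sq_nonneg _) (one_le_pow₀ hz)
  have hQS : Q (S w) = 0 := by
    rw [← norm_eq_zero, ← sq_eq_zero_iff]
    linarith [sq_nonneg ‖Q (S w)‖]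
  rwa [hQS, sub_zero] at hw

theorem Matrix.IsHermitian.mulVec_eq_smul_of_sub_mulVec_eq_smul {𝕜 ι : Type*} [RCLike 𝕜]
    [Fintype ι] [DecidableEq ι] {Q S : Matrix ι ι 𝕜} (hQ : Q.IsHermitian)
    (hQQ : IsIdempotentElem Q) (hS : ∀ x, ‖WithLp.toLp 2 (S *ᵥ x)‖ ≤ ‖WithLp.toLp 2 x‖)
    {z : 𝕜} (hz : 1 ≤ ‖z‖) {w : ι → 𝕜} (hw : S *ᵥ w - Q *ᵥ (S *ᵥ w) = z • w) :
    S *ᵥ w = z • w := by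
  have hQproj : (toEuclideanLin Q).IsSymmetricProjection :=
    ⟨by rw [IsIdempotentElem, Module.End.mul_eq_comp, ← toLpLin_mul_same, hQQ.eq],
      isSymmetric_toEuclideanLin_iff.mpr hQ⟩
  have h := hQproj.apply_eq_smul_of_sub_apply_eq_smul (S := toEuclideanLin S)
    (fun x => hS x.ofLp) hz (w := WithLp.toLp 2 w) (congrArg (WithLp.toLp 2) hw)
  exact congrArg WithLp.ofLp h

end Compression

section Trajectory

variable {n m p : ℕ} (A : Matrix (Fin n) (Fin n) ℝ) (B : Matrix (Fin n) (Fin m) ℝ)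
  (C : Matrix (Fin p) (Fin n) ℝ) (D : Matrix (Fin p) (Fin m) ℝ)

theorem stateSeq_eq_sum (ξ : Fin n → ℝ) (u : ℕ → Fin m → ℝ) (k : ℕ) :
    stateSeq A B ξ u k = A ^ k *ᵥ ξ + ∑ i ∈ Finset.range k, (A ^ (k - i - 1) * B) *ᵥ u i := by
  induction k with
  | zero => simp [stateSeq]
  | succ k ih =>
    have hpow : ∀ i ∈ Finset.range k, A *ᵥ ((A ^ (k - i - 1) * B) *ᵥ u i)
        = (A ^ (k + 1 - i - 1) * B) *ᵥ u i := fun i hi => by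
      rw [mulVec_mulVec, ← Matrix.mul_assoc, ← pow_succ',
        show k - i - 1 + 1 = k + 1 - i - 1 by have := Finset.mem_range.mp hi; omega]
    rw [stateSeq, ih, mulVec_add, mulVec_mulVec, ← pow_succ', Matrix.mulVec_sum,
      Finset.sum_congr rfl hpow, Finset.sum_range_succ, add_assoc]
    simp

theorem invMat_mulVec_apply (L : ℕ) (u : ℕ → Fin m → ℝ) (j : Fin (L + 1)) (r : Fin p) :
    (invMat A B C D L *ᵥ fun ic => u ic.1 ic.2) (j, r)
      = ∑ i ∈ Finset.range j, ((C * A ^ (j - i - 1) * B) *ᵥ u i) r + (D *ᵥ u j) r := by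
  have hblock : ∀ i : Fin (L + 1), ∑ c, invMat A B C D L (j, r) (i, c) * u i c
      = if (j : ℕ) = i then (D *ᵥ u i) r
        else if (i : ℕ) < j then ((C * A ^ ((j : ℕ) - i - 1) * B) *ᵥ u i) r else 0 := by
    intro i
    simp only [invMat]
    split_ifs <;> simp [mulVec, dotProduct]
  rw [mulVec, dotProduct, Fintype.sum_prod_type]
  simp only [hblock]
  rw [Fin.sum_univ_eq_sum_range (fun i => if (j : ℕ) = i then (D *ᵥ u i) r
      else if i < j then ((C * A ^ (j - i - 1) * B) *ᵥ u i) r else 0),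
    ← Finset.sum_subset (Finset.range_subset_range.mpr j.isLt), Finset.sum_range_succ]
  · congr 1
    · refine Finset.sum_congr rfl fun i hi => ?_
      have := Finset.mem_range.mp hi
      rw [if_neg (by omega), if_pos this]
    · rw [if_pos rfl]
  · intro i _ hi
    have := Finset.mem_range.not.mp hi
    rw [if_neg (by omega), if_neg (by omega)]

theorem obsMat_mulVec_add_invMat_mulVec (L : ℕ) (ξ : Fin n → ℝ) (u : ℕ → Fin m → ℝ) :
    obsMat A C L *ᵥ ξ + invMat A B C D L *ᵥ (fun ic => u ic.1 ic.2)
      = fun jr => (C *ᵥ stateSeq A B ξ u jr.1 + D *ᵥ u jr.1) jr.2 := by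
  ext ⟨j, r⟩
  rw [Pi.add_apply, invMat_mulVec_apply, stateSeq_eq_sum, mulVec_add, Matrix.mulVec_sum]
  simp only [mulVec_mulVec, Pi.add_apply, Finset.sum_apply, Matrix.mul_assoc]
  rw [← add_assoc]
  rfl

theorem idZero_mulVec (L : ℕ) (u : ℕ → Fin m → ℝ) :
    (idZero m L *ᵥ fun ic => u ic.1 ic.2) = u 0 := by
  ext r
  rw [mulVec, dotProduct, Fintype.sum_eq_single (0, r)]
  · simp [idZero]
  · rintro ⟨i, c⟩ hic
    simp only [idZero]
    rw [if_neg, zero_mul]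
    rintro ⟨hi, rfl⟩
    exact hic (Prod.ext (Fin.ext hi) rfl)

end Trajectory

def RecoversFirstInput {n m p : ℕ} (A : Matrix (Fin n) (Fin n) ℝ) (B : Matrix (Fin n) (Fin m) ℝ)
    (C : Matrix (Fin p) (Fin n) ℝ) (D : Matrix (Fin p) (Fin m) ℝ)
    (Ct : Matrix (Fin m) (Fin n) ℝ) : Prop :=
  ∀ ξ u, (∀ k, C *ᵥ stateSeq A B ξ u k + D *ᵥ u k = 0) → u 0 = Ct *ᵥ ξ

theorem recoversFirstInput_of_mul_invMat {n m p L : ℕ} {A : Matrix (Fin n) (Fin n) ℝ}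
    {B : Matrix (Fin n) (Fin m) ℝ} {C : Matrix (Fin p) (Fin n) ℝ} {D : Matrix (Fin p) (Fin m) ℝ}
    {P : Matrix (Fin m) (Fin (L + 1) × Fin p) ℝ} (hP : P * invMat A B C D L = idZero m L) :
    RecoversFirstInput A B C D (-(P * obsMat A C L)) := fun ξ u hy => by
  have hstack := congrArg (P *ᵥ ·) (obsMat_mulVec_add_invMat_mulVec A B C D L ξ u)
  simp only [hy, Pi.zero_apply, ← Pi.zero_def, mulVec_zero, mulVec_add, mulVec_mulVec, hP,
    idZero_mulVec] at hstack
  rw [neg_mulVec, eq_neg_iff_add_eq_zero, add_comm, hstack]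

theorem tildeObs_mulVec_eq_zero_iff {n m N : ℕ} {At : Matrix (Fin n) (Fin n) ℝ}
    {Ct : Matrix (Fin m) (Fin n) ℝ} {x : Fin n → ℝ} :
    tildeObs At Ct N *ᵥ x = 0 ↔ ∀ k < N, (Ct * At ^ k) *ᵥ x = 0 := by
  constructor
  · intro h k hk
    ext r
    exact congrFun h (⟨k, hk⟩, r)
  · intro h
    ext ⟨k, r⟩
    exact congrFun (h k k.isLt) r

section OutputNulling

variable {n m p : ℕ} {A : Matrix (Fin n) (Fin n) ℝ} {B : Matrix (Fin n) (Fin m) ℝ}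
  {C : Matrix (Fin p) (Fin n) ℝ} {D : Matrix (Fin p) (Fin m) ℝ} {Ct : Matrix (Fin m) (Fin n) ℝ}
  {ξ : Fin n → ℝ}

theorem stateSeq_stateSeq_one (ξ : Fin n → ℝ) (u : ℕ → Fin m → ℝ) (k : ℕ) :
    stateSeq A B (stateSeq A B ξ u 1) (fun j => u (j + 1)) k = stateSeq A B ξ u (k + 1) := by
  induction k with
  | zero => rfl
  | succ k ih => rw [stateSeq, ih]; rfl

namespace RecoversFirstInput

theorem add_mul_mulVec_eq_zero (h : RecoversFirstInput A B C D Ct)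
    (hξ : ξ ∈ outputNulling A B C D) : (C + D * Ct) *ᵥ ξ = 0 := by
  obtain ⟨u, hu⟩ := hξ
  rw [add_mulVec, ← mulVec_mulVec, ← h ξ u hu]
  exact hu 0

theorem add_mul_mulVec_mem (h : RecoversFirstInput A B C D Ct)
    (hξ : ξ ∈ outputNulling A B C D) : (A + B * Ct) *ᵥ ξ ∈ outputNulling A B C D := by
  obtain ⟨u, hu⟩ := hξ
  refine ⟨fun k => u (k + 1), fun k => ?_⟩
  have hstep : (A + B * Ct) *ᵥ ξ = stateSeq A B ξ u 1 := by
    rw [add_mulVec, ← mulVec_mulVec, ← h ξ u hu]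
    rfl
  rw [hstep, stateSeq_stateSeq_one]
  exact hu (k + 1)

theorem pow_mulVec_mem (h : RecoversFirstInput A B C D Ct) (hξ : ξ ∈ outputNulling A B C D)
    (k : ℕ) : (A + B * Ct) ^ k *ᵥ ξ ∈ outputNulling A B C D := by
  induction k with
  | zero => simpa using hξ
  | succ k ih => simpa [pow_succ', ← mulVec_mulVec] using h.add_mul_mulVec_mem ih

theorem eq_zero_of_mem_outputNulling (h : RecoversFirstInput A B C D Ct)
    (hobs : ∀ ξ : Fin n → ℝ, (∀ k < n, (C * A ^ k) *ᵥ ξ = 0) → ξ = 0) {N : ℕ} (hN : n ≤ N)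
    (hξ : ξ ∈ outputNulling A B C D) (h0 : ∀ k < N, (Ct * (A + B * Ct) ^ k) *ᵥ ξ = 0) :
    ξ = 0 := by
  -- the feedback `B Ct` never acts along this trajectory
  have hpow : ∀ k ≤ N, (A + B * Ct) ^ k *ᵥ ξ = A ^ k *ᵥ ξ := by
    intro k hk
    induction k with
    | zero => simp
    | succ k ih =>
      rw [pow_succ', ← mulVec_mulVec, add_mulVec, ← mulVec_mulVec (M := B), mulVec_mulVec (M := Ct),
        h0 k (by omega), mulVec_zero, add_zero, ih (by omega), mulVec_mulVec, ← pow_succ']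
  refine hobs ξ fun k hk => ?_
  have hy := h.add_mul_mulVec_eq_zero (h.pow_mulVec_mem hξ k)
  rwa [add_mulVec, ← mulVec_mulVec (M := D), mulVec_mulVec (M := Ct), h0 k (by omega),
    mulVec_zero, add_zero, hpow k (by omega), mulVec_mulVec] at hy

end RecoversFirstInput

end OutputNulling

section InvariantZeros

variable {n m p : ℕ} {A : Matrix (Fin n) (Fin n) ℝ} {B : Matrix (Fin n) (Fin m) ℝ}
  {C : Matrix (Fin p) (Fin n) ℝ} {D : Matrix (Fin p) (Fin m) ℝ} {Ct : Matrix (Fin m) (Fin n) ℝ}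
  {z : ℂ} {x : Fin n → ℂ} {u : Fin m → ℂ}

theorem rosenbrock_mulVec_sumElim_eq_zero_iff :
    rosenbrock A B C D z *ᵥ Sum.elim x u = 0 ↔
      A.map Complex.ofReal *ᵥ x + B.map Complex.ofReal *ᵥ u = z • x ∧
        C.map Complex.ofReal *ᵥ x + D.map Complex.ofReal *ᵥ u = 0 := by
  rw [rosenbrock, fromBlocks_mulVec, Sum.elim_comp_inl, Sum.elim_comp_inr, ← Sum.elim_zero_zero,
    Sum.elim_eq_iff, sub_mulVec, smul_mulVec, one_mulVec, sub_add_eq_add_sub, sub_eq_zero]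

theorem stateSeq_re_pow_smul
    (hx : A.map Complex.ofReal *ᵥ x + B.map Complex.ofReal *ᵥ u = z • x) (t : ℕ) :
    stateSeq A B (fun i => (x i).re) (fun k j => ((z ^ k • u) j).re) t
      = fun i => ((z ^ t • x) i).re := by
  induction t with
  | zero => simp [stateSeq]
  | succ t ih =>
    ext i
    rw [stateSeq, ih, Pi.add_apply, ← re_map_ofReal_mulVec_apply, ← re_map_ofReal_mulVec_apply,
      ← Complex.add_re, ← Pi.add_apply, mulVec_smul, mulVec_smul, ← smul_add, hx, smul_smul,
      pow_succ]

theorem output_re_pow_smul_eq_zero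
    (hx : A.map Complex.ofReal *ᵥ x + B.map Complex.ofReal *ᵥ u = z • x)
    (hy : C.map Complex.ofReal *ᵥ x + D.map Complex.ofReal *ᵥ u = 0) :
    ∀ t, C *ᵥ stateSeq A B (fun i => (x i).re) (fun k j => ((z ^ k • u) j).re) t
      + D *ᵥ (fun j => ((z ^ t • u) j).re) = 0 := by
  intro t
  ext i
  rw [stateSeq_re_pow_smul hx, Pi.add_apply, ← re_map_ofReal_mulVec_apply,
    ← re_map_ofReal_mulVec_apply, ← Complex.add_re, ← Pi.add_apply, mulVec_smul, mulVec_smul,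
    ← smul_add, hy]
  simp

theorem RecoversFirstInput.exists_mulVec_eq_and_mulVec_eq (h : RecoversFirstInput A B C D Ct)
    {s : ℕ} {Xt : Matrix (Fin n) (Fin s) ℝ}
    (hXt : ∀ ξ, ξ ∈ outputNulling A B C D ↔ ∃ w, Xt *ᵥ w = ξ)
    (hx : A.map Complex.ofReal *ᵥ x + B.map Complex.ofReal *ᵥ u = z • x)
    (hy : C.map Complex.ofReal *ᵥ x + D.map Complex.ofReal *ᵥ u = 0) :
    (∃ v, Xt.map Complex.ofReal *ᵥ v = x) ∧ Ct.map Complex.ofReal *ᵥ x = u := by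
  have hreal : ∀ c : ℂ, (fun i => ((c • x) i).re) ∈ outputNulling A B C D ∧
      (fun j => ((c • u) j).re) = Ct *ᵥ fun i => ((c • x) i).re := by
    intro c
    have hcx : A.map Complex.ofReal *ᵥ (c • x) + B.map Complex.ofReal *ᵥ (c • u) = z • c • x := by
      rw [mulVec_smul, mulVec_smul, ← smul_add, hx, smul_comm]
    have hcy : C.map Complex.ofReal *ᵥ (c • x) + D.map Complex.ofReal *ᵥ (c • u) = 0 := by
      rw [mulVec_smul, mulVec_smul, ← smul_add, hy, smul_zero]
    have hnull := output_re_pow_smul_eq_zero hcx hcy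
    exact ⟨⟨_, hnull⟩, by simpa using h _ _ hnull⟩
  obtain ⟨hre, hure⟩ := hreal 1
  obtain ⟨him, huim⟩ := hreal (-Complex.I)
  simp only [Pi.smul_apply, smul_eq_mul, Complex.mul_re, Complex.neg_re, Complex.I_re,
    Complex.I_im, one_mul, zero_mul, zero_sub, neg_mul, neg_neg] at hre hure him huim
  obtain ⟨a, ha⟩ := (hXt _).1 hre
  obtain ⟨b, hb⟩ := (hXt _).1 him
  refine ⟨⟨fun j => ⟨a j, b j⟩, ?_⟩, ?_⟩
  all_goals
    ext i
    apply Complex.ext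
    all_goals simp only [re_map_ofReal_mulVec_apply, im_map_ofReal_mulVec_apply]
  · exact congrFun ha i
  · exact congrFun hb i
  · exact (congrFun hure i).symm
  · exact (congrFun huim i).symm

end InvariantZeros

section OutputNullingBasis

variable {n m p s : ℕ} {A : Matrix (Fin n) (Fin n) ℝ} {B : Matrix (Fin n) (Fin m) ℝ}
  {C : Matrix (Fin p) (Fin n) ℝ} {D : Matrix (Fin p) (Fin m) ℝ} {Ct : Matrix (Fin m) (Fin n) ℝ}
  {Xt : Matrix (Fin n) (Fin s) ℝ}

namespace RecoversFirstInput

theorem add_mul_mul_eq_zero (h : RecoversFirstInput A B C D Ct)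
    (hXt : ∀ ξ, ξ ∈ outputNulling A B C D ↔ ∃ w, Xt *ᵥ w = ξ) : (C + D * Ct) * Xt = 0 :=
  ext_iff_mulVec.mpr fun w => by
    rw [← mulVec_mulVec, zero_mulVec]
    exact h.add_mul_mulVec_eq_zero ((hXt _).2 ⟨w, rfl⟩)

theorem exists_mul_eq_add_mul_mul (h : RecoversFirstInput A B C D Ct)
    (hXt : ∀ ξ, ξ ∈ outputNulling A B C D ↔ ∃ w, Xt *ᵥ w = ξ) :
    ∃ F : Matrix (Fin s) (Fin s) ℝ, Xt * F = (A + B * Ct) * Xt :=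
  exists_mul_eq_of_forall_exists_mulVec_eq fun w => (hXt _).1 <| by
    rw [← mulVec_mulVec]
    exact h.add_mul_mulVec_mem ((hXt _).2 ⟨w, rfl⟩)

theorem mul_mul_tildeObs_mul_eq (h : RecoversFirstInput A B C D Ct)
    (hobs : ∀ ξ : Fin n → ℝ, (∀ k < n, (C * A ^ k) *ᵥ ξ = 0) → ξ = 0) {N : ℕ} (hN : n ≤ N)
    (hXt : ∀ ξ, ξ ∈ outputNulling A B C D ↔ ∃ w, Xt *ᵥ w = ξ)
    {G : Matrix (Fin s) (Fin N × Fin m) ℝ}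
    (hKGK : tildeObs (A + B * Ct) Ct N * Xt * G * (tildeObs (A + B * Ct) Ct N * Xt)
      = tildeObs (A + B * Ct) Ct N * Xt) :
    Xt * G * (tildeObs (A + B * Ct) Ct N * Xt) = Xt := by
  refine mul_mul_eq_of_mulVec_eq_zero (fun w hw => ?_) hKGK
  rw [← mulVec_mulVec, tildeObs_mulVec_eq_zero_iff] at hw
  exact h.eq_zero_of_mem_outputNulling hobs hN ((hXt _).2 ⟨w, rfl⟩) hw

theorem rosenbrock_rank_lt_iff (h : RecoversFirstInput A B C D Ct)
    (hXt : ∀ ξ, ξ ∈ outputNulling A B C D ↔ ∃ w, Xt *ᵥ w = ξ) (z : ℂ) :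
    (rosenbrock A B C D z).rank < n + m ↔
      ∃ v, Xt.map Complex.ofReal *ᵥ v ≠ 0 ∧
        (A + B * Ct).map Complex.ofReal *ᵥ (Xt.map Complex.ofReal *ᵥ v)
          = z • (Xt.map Complex.ofReal *ᵥ v) := by
  have hcard : Fintype.card (Fin n ⊕ Fin m) = n + m := by simp
  have hAt : (A + B * Ct).map Complex.ofReal
      = A.map Complex.ofReal + B.map Complex.ofReal * Ct.map Complex.ofReal := by
    rw [map_ofReal_add, map_ofReal_mul]
  rw [← hcard, rank_lt_card_width_iff]
  constructor
  · rintro ⟨w, hw0, hw⟩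
    rw [← Sum.elim_comp_inl_inr w, rosenbrock_mulVec_sumElim_eq_zero_iff] at hw
    obtain ⟨⟨v, hv⟩, hu⟩ := h.exists_mulVec_eq_and_mulVec_eq hXt hw.1 hw.2
    refine ⟨v, fun hx => hw0 ?_, ?_⟩
    · rw [← Sum.elim_comp_inl_inr w, ← hu, ← hv, hx, mulVec_zero, Sum.elim_zero_zero]
    · rw [hv, hAt, add_mulVec, ← mulVec_mulVec, hu, hw.1]
  · rintro ⟨v, hx0, hx⟩
    refine ⟨Sum.elim (Xt.map Complex.ofReal *ᵥ v) (Ct.map Complex.ofReal *ᵥ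
      (Xt.map Complex.ofReal *ᵥ v)), fun h0 => hx0 (funext fun i => congrFun h0 (Sum.inl i)), ?_⟩
    rw [rosenbrock_mulVec_sumElim_eq_zero_iff]
    refine ⟨by rwa [hAt, add_mulVec, ← mulVec_mulVec (M := B.map _)] at hx, ?_⟩
    rw [mulVec_mulVec (M := D.map _), ← map_ofReal_mul, ← add_mulVec, ← map_ofReal_add,
      mulVec_mulVec, ← map_ofReal_mul, h.add_mul_mul_eq_zero hXt]
    simp

end RecoversFirstInput

end OutputNullingBasis

section BlockCompanion

variable {n m N : ℕ}

theorem tildeObs_mul_apply {ι : Type*} (At : Matrix (Fin n) (Fin n) ℝ)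
    (Ct : Matrix (Fin m) (Fin n) ℝ) (Y : Matrix (Fin n) ι ℝ) (k : Fin N) (r : Fin m) (j : ι) :
    (tildeObs At Ct N * Y) (k, r) j = (Ct * At ^ (k : ℕ) * Y) r j := by
  simp [mul_apply, tildeObs]

theorem blockCompanion_map_mulVec_apply {S : Type*} [CommSemiring S] (f : ℝ →+* S)
    (Mu : Matrix (Fin m) (Fin N × Fin m) ℝ) (W : Fin N × Fin m → S) (k : Fin N) (r : Fin m) :
    ((blockCompanion Mu).map f *ᵥ W) (k, r)
      = if h : (k : ℕ) + 1 < N then W (⟨k + 1, h⟩, r) else (Mu.map f *ᵥ W) r := by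
  split_ifs with h
  · rw [mulVec, dotProduct, Fintype.sum_eq_single (⟨k + 1, h⟩, r)]
    · simp [blockCompanion, h.ne]
    · rintro ⟨l, c⟩ hlc
      have hne : ¬((l : ℕ) = k + 1 ∧ r = c) := fun ⟨hl, hc⟩ => hlc (by ext <;> simp [hl, hc])
      simp [blockCompanion, h.ne, hne]
  · simp [mulVec, dotProduct, blockCompanion, show (k : ℕ) + 1 = N by omega]

theorem blockCompanion_mul_tildeObs_mul {s : ℕ} {Mu : Matrix (Fin m) (Fin N × Fin m) ℝ}
    {At : Matrix (Fin n) (Fin n) ℝ} {Ct : Matrix (Fin m) (Fin n) ℝ} {X : Matrix (Fin n) (Fin s) ℝ}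
    (hMu : Mu * (tildeObs At Ct N * X) = Ct * At ^ N * X) :
    blockCompanion Mu * (tildeObs At Ct N * X) = tildeObs At Ct N * (At * X) := by
  ext ⟨k, r⟩ j
  have hrow := blockCompanion_map_mulVec_apply (RingHom.id ℝ) Mu
    (fun l => (tildeObs At Ct N * X) l j) k r
  rw [RingHom.coe_id, map_id, map_id] at hrow
  rw [tildeObs_mul_apply, show Ct * At ^ (k : ℕ) * (At * X) = Ct * At ^ ((k : ℕ) + 1) * X by
    rw [pow_succ]; simp only [Matrix.mul_assoc]]
  split_ifs at hrow with h
  · rw [← tildeObs_mul_apply At Ct X ⟨k + 1, h⟩]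
    exact hrow
  · rw [show (k : ℕ) + 1 = N by omega, ← hMu]
    exact hrow

end BlockCompanion

section Shift

variable {m N : ℕ}

theorem blockCompanion_map_ofReal_mulVec_apply (Mu : Matrix (Fin m) (Fin N × Fin m) ℝ)
    (W : Fin N × Fin m → ℂ) (k : Fin N) (r : Fin m) :
    ((blockCompanion Mu).map Complex.ofReal *ᵥ W) (k, r)
      = if h : (k : ℕ) + 1 < N then W (⟨k + 1, h⟩, r) else (Mu.map Complex.ofReal *ᵥ W) r :=
  blockCompanion_map_mulVec_apply Complex.ofRealHom Mu W k r

theorem blockCompanion_map_ofReal_mulVec_eq_of_mulVec_eq_zero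
    {Mu : Matrix (Fin m) (Fin N × Fin m) ℝ} {W : Fin N × Fin m → ℂ}
    (hW : Mu.map Complex.ofReal *ᵥ W = 0) :
    (blockCompanion Mu).map Complex.ofReal *ᵥ W = (blockCompanion 0).map Complex.ofReal *ᵥ W := by
  ext ⟨k, r⟩
  simp [blockCompanion_map_ofReal_mulVec_apply, hW]

theorem norm_toLp_blockCompanion_zero_mulVec_le (W : Fin N × Fin m → ℂ) :
    ‖WithLp.toLp 2 ((blockCompanion (0 : Matrix (Fin m) (Fin N × Fin m) ℝ)).map Complex.ofReal
      *ᵥ W)‖ ≤ ‖WithLp.toLp 2 W‖ := by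
  refine pow_le_pow_iff_left₀ (norm_nonneg _) (norm_nonneg _) two_ne_zero |>.mp ?_
  rw [EuclideanSpace.norm_sq_eq, EuclideanSpace.norm_sq_eq]
  rcases N with _ | N
  · simp
  rw [Fintype.sum_prod_type, Fintype.sum_prod_type, Fin.sum_univ_castSucc, Fin.sum_univ_succ]
  simp only [blockCompanion_map_ofReal_mulVec_apply, Fin.val_castSucc, Order.lt_add_one_iff,
    Order.add_one_le_iff, Fin.is_lt, ↓reduceDIte, Fin.val_last, lt_self_iff_false,
    Complex.ofReal_zero, Matrix.map_zero, zero_mulVec, Pi.zero_apply, norm_zero, ne_eq,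
    OfNat.ofNat_ne_zero, not_false_eq_true, zero_pow, Finset.sum_const_zero, add_zero]
  exact le_add_of_nonneg_left (by positivity)

theorem eq_zero_of_blockCompanion_zero_mulVec_eq_smul {z : ℂ} (hz : z ≠ 0)
    {W : Fin N × Fin m → ℂ}
    (hW : (blockCompanion (0 : Matrix (Fin m) (Fin N × Fin m) ℝ)).map Complex.ofReal *ᵥ W
      = z • W) : W = 0 := by
  have hback : ∀ d k (hk : k < N) r, k + d + 1 = N → W (⟨k, hk⟩, r) = 0 := by
    intro d
    induction d with
    | zero =>
      intro k hk r hkN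
      have h := congrFun hW (⟨k, hk⟩, r)
      rw [blockCompanion_map_ofReal_mulVec_apply, dif_neg (by simp; omega)] at h
      simpa [hz] using h.symm
    | succ d ih =>
      intro k hk r hkN
      have h := congrFun hW (⟨k, hk⟩, r)
      rw [blockCompanion_map_ofReal_mulVec_apply, dif_pos (by simp; omega),
        ih (k + 1) _ r (by omega)] at h
      simpa [hz] using h.symm
  ext ⟨⟨k, hk⟩, r⟩
  exact hback (N - k - 1) k hk r (by omega)

end Shift

section Spectrum

variable {n m N s : ℕ} {At : Matrix (Fin n) (Fin n) ℝ} {Ct : Matrix (Fin m) (Fin n) ℝ}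
  {Xt : Matrix (Fin n) (Fin s) ℝ} {G : Matrix (Fin s) (Fin N × Fin m) ℝ}

theorem blockCompanion_mul_tildeObs_mul_of_mul_mul_eq
    (hXGK : Xt * G * (tildeObs At Ct N * Xt) = Xt) :
    blockCompanion (Ct * At ^ N * Xt * G) * (tildeObs At Ct N * Xt)
      = tildeObs At Ct N * (At * Xt) :=
  blockCompanion_mul_tildeObs_mul <| by
    rw [Matrix.mul_assoc (Ct * At ^ N * Xt), Matrix.mul_assoc (Ct * At ^ N), ← Matrix.mul_assoc Xt,
      hXGK]

theorem blockCompanion_mul_tildeObs_mul_eq_mul {F : Matrix (Fin s) (Fin s) ℝ}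
    (hF : Xt * F = At * Xt) (hXGK : Xt * G * (tildeObs At Ct N * Xt) = Xt) :
    blockCompanion (Ct * At ^ N * Xt * G) * (tildeObs At Ct N * Xt)
      = tildeObs At Ct N * Xt * F := by
  rw [blockCompanion_mul_tildeObs_mul_of_mul_mul_eq hXGK, ← hF, Matrix.mul_assoc]

theorem mem_spectrum_blockCompanion_of_mulVec_eq_smul
    (hXGK : Xt * G * (tildeObs At Ct N * Xt) = Xt) {z : ℂ} {v : Fin s → ℂ}
    (hx0 : Xt.map Complex.ofReal *ᵥ v ≠ 0)
    (hx : At.map Complex.ofReal *ᵥ (Xt.map Complex.ofReal *ᵥ v)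
      = z • (Xt.map Complex.ofReal *ᵥ v)) :
    z ∈ spectrum ℂ ((blockCompanion (Ct * At ^ N * Xt * G)).map Complex.ofReal) := by
  refine (mem_spectrum_iff_exists_mulVec_eq_smul _ z).mpr
    ⟨(tildeObs At Ct N * Xt).map Complex.ofReal *ᵥ v, fun h0 => hx0 ?_, ?_⟩
  · rw [← hXGK, map_ofReal_mul, ← mulVec_mulVec, h0, mulVec_zero]
  · rw [mulVec_mulVec, ← map_ofReal_mul, blockCompanion_mul_tildeObs_mul_of_mul_mul_eq hXGK,
      map_ofReal_mul, map_ofReal_mul, ← mulVec_mulVec, ← mulVec_mulVec, hx, mulVec_smul,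
      mulVec_mulVec, ← map_ofReal_mul]

theorem eq_mulVec_of_blockCompanion_mulVec_eq_smul
    (hG : IsMoorePenrose (tildeObs At Ct N * Xt) G) {F : Matrix (Fin s) (Fin s) ℝ}
    (hF : Xt * F = At * Xt) (hXGK : Xt * G * (tildeObs At Ct N * Xt) = Xt) {z : ℂ}
    (hz : 1 ≤ ‖z‖) {U : Fin N × Fin m → ℂ}
    (hU : (blockCompanion (Ct * At ^ N * Xt * G)).map Complex.ofReal *ᵥ U = z • U) :
    U = (tildeObs At Ct N * Xt * G).map Complex.ofReal *ᵥ U := by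
  obtain ⟨hKGK, hGKG, hKGsymm, -⟩ := hG
  set K := tildeObs At Ct N * Xt
  set Q := (K * G).map Complex.ofReal
  -- `W` is the part of `U` orthogonal to the range of `K`; on it `R` acts as the bare shift.
  set W := U - Q *ᵥ U
  have hQK : ∀ (Y : Matrix (Fin s) (Fin N × Fin m) ℝ) (y : Fin N × Fin m → ℂ),
      Q *ᵥ ((K * Y).map Complex.ofReal *ᵥ y) = (K * Y).map Complex.ofReal *ᵥ y := by
    intro Y y
    rw [mulVec_mulVec, ← map_ofReal_mul, ← Matrix.mul_assoc (K * G) K Y, hKGK]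
  have hGW : G.map Complex.ofReal *ᵥ W = 0 := by
    rw [mulVec_sub, mulVec_mulVec, ← map_ofReal_mul, ← Matrix.mul_assoc, hGKG, sub_self]
  have hRW : (blockCompanion (Ct * At ^ N * Xt * G)).map Complex.ofReal *ᵥ W
      = z • U - (K * (F * G)).map Complex.ofReal *ᵥ U := by
    rw [mulVec_sub, hU, mulVec_mulVec, ← map_ofReal_mul, ← Matrix.mul_assoc,
      blockCompanion_mul_tildeObs_mul_eq_mul hF hXGK, Matrix.mul_assoc]
  have hRS := blockCompanion_map_ofReal_mulVec_eq_of_mulVec_eq_zero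
    (Mu := Ct * At ^ N * Xt * G) (by rw [map_ofReal_mul, ← mulVec_mulVec, hGW, mulVec_zero])
  have hSW : (blockCompanion 0).map Complex.ofReal *ᵥ W = z • W := by
    refine IsHermitian.mulVec_eq_smul_of_sub_mulVec_eq_smul (Q := Q) ?_ ?_
      norm_toLp_blockCompanion_zero_mulVec_le hz ?_
    · ext i j
      simpa [Q] using congrFun (congrFun hKGsymm i) j
    · rw [IsIdempotentElem, ← map_ofReal_mul, ← Matrix.mul_assoc, hKGK]
    · rw [← hRS, hRW, mulVec_sub, mulVec_smul, hQK]
      simp only [W, smul_sub]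
      abel
  have hW := eq_zero_of_blockCompanion_zero_mulVec_eq_smul
    (norm_pos_iff.mp (zero_lt_one.trans_le hz)) hSW
  exact sub_eq_zero.mp hW

theorem exists_mulVec_eq_smul_of_mem_spectrum_blockCompanion
    (hG : IsMoorePenrose (tildeObs At Ct N * Xt) G) {F : Matrix (Fin s) (Fin s) ℝ}
    (hF : Xt * F = At * Xt) (hXGK : Xt * G * (tildeObs At Ct N * Xt) = Xt) {z : ℂ}
    (hz : 1 ≤ ‖z‖)
    (hspec : z ∈ spectrum ℂ ((blockCompanion (Ct * At ^ N * Xt * G)).map Complex.ofReal)) :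
    ∃ v, Xt.map Complex.ofReal *ᵥ v ≠ 0 ∧
      At.map Complex.ofReal *ᵥ (Xt.map Complex.ofReal *ᵥ v) = z • (Xt.map Complex.ofReal *ᵥ v) := by
  obtain ⟨U, hU0, hU⟩ := (mem_spectrum_iff_exists_mulVec_eq_smul _ z).mp hspec
  set v := G.map Complex.ofReal *ᵥ U
  have hUv : U = (tildeObs At Ct N * Xt).map Complex.ofReal *ᵥ v := by
    rw [eq_mulVec_of_blockCompanion_mulVec_eq_smul hG hF hXGK hz hU, map_ofReal_mul,
      ← mulVec_mulVec]
  have hKF : (tildeObs At Ct N * Xt).map Complex.ofReal *ᵥ (F.map Complex.ofReal *ᵥ v - z • v)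
      = 0 := by
    rw [mulVec_sub, mulVec_mulVec, ← map_ofReal_mul,
      ← blockCompanion_mul_tildeObs_mul_eq_mul hF hXGK, map_ofReal_mul, ← mulVec_mulVec, ← hUv, hU,
      mulVec_smul, ← hUv, sub_self]
  have hXF : Xt.map Complex.ofReal *ᵥ (F.map Complex.ofReal *ᵥ v - z • v) = 0 := by
    rw [← hXGK, map_ofReal_mul, ← mulVec_mulVec, hKF, mulVec_zero]
  refine ⟨v, fun h0 => hU0 ?_, ?_⟩
  · rw [hUv, map_ofReal_mul, ← mulVec_mulVec, h0, mulVec_zero]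
  · rw [mulVec_sub, mulVec_smul, sub_eq_zero, mulVec_mulVec, ← map_ofReal_mul, hF] at hXF
    rwa [mulVec_mulVec, ← map_ofReal_mul]

end Spectrum

/-- Main theorem: with `Ã := A - B P O_L`, `C̃ := -P O_L`, `(A,C)` observable, `N ≥ n`,
`X̃` a matrix whose column space is `V₀`, `G` a Moore–Penrose pseudoinverse of
`Õ_{N-1} X̃`, `M_u := C̃ Ã^N X̃ G`, and `R` the block companion matrix of `M_u`, all
eigenvalues of `R` lie strictly inside the unit circle iff all invariant zeros of
`(A,B,C,D)` do. -/
theorem R_schur_stable_iff_invariant_zeros_stable {n m p L N s : ℕ}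
    (A : Matrix (Fin n) (Fin n) ℝ) (B : Matrix (Fin n) (Fin m) ℝ)
    (C : Matrix (Fin p) (Fin n) ℝ) (D : Matrix (Fin p) (Fin m) ℝ)
    (P : Matrix (Fin m) (Fin (L + 1) × Fin p) ℝ)
    (hP : P * invMat A B C D L = idZero m L)
    (hobs : ∀ ξ : Fin n → ℝ, (∀ k < n, (C * A ^ k).mulVec ξ = 0) → ξ = 0)
    (hN : n ≤ N)
    (Xt : Matrix (Fin n) (Fin s) ℝ)
    (hXt : ∀ ξ : Fin n → ℝ, ξ ∈ outputNulling A B C D ↔ ∃ w : Fin s → ℝ, Xt.mulVec w = ξ)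
    (G : Matrix (Fin s) (Fin N × Fin m) ℝ)
    (hG : IsMoorePenrose
      (tildeObs (A - B * P * obsMat A C L) (-(P * obsMat A C L)) N * Xt) G) :
    (∀ z ∈ spectrum ℂ
        ((blockCompanion
          ((-(P * obsMat A C L)) * (A - B * P * obsMat A C L) ^ N * Xt * G)).map
            Complex.ofReal),
        ‖z‖ < 1) ↔
    (∀ z : ℂ, (rosenbrock A B C D z).rank < n + m → ‖z‖ < 1) := by
  have hrec := recoversFirstInput_of_mul_invMat hP
  rw [show A - B * P * obsMat A C L = A + B * -(P * obsMat A C L) by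
    rw [Matrix.mul_neg, ← Matrix.mul_assoc, sub_eq_add_neg]] at hG ⊢
  obtain ⟨F, hF⟩ := hrec.exists_mul_eq_add_mul_mul hXt
  have hXGK := hrec.mul_mul_tildeObs_mul_eq hobs hN hXt hG.1
  constructor
  · intro hR z hz
    obtain ⟨v, hx0, hx⟩ := (hrec.rosenbrock_rank_lt_iff hXt z).mp hz
    exact hR z (mem_spectrum_blockCompanion_of_mulVec_eq_smul hXGK hx0 hx)
  · intro hzeros z hz
    by_contra! hge
    have hzero := (hrec.rosenbrock_rank_lt_iff hXt z).mpr
      (exists_mulVec_eq_smul_of_mem_spectrum_blockCompanion hG hF hXGK hge hz)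
    exact (hzeros z hzero).not_ge hge
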